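/- Let (M_k)_{k≥0} be a square-integrable martingale with M_0 = 0 with respect to a filtration (ℱ_k)_{k≥0}. Then for every integer k ≥ 1 and all real numbers x > 0 and y > 0, P(|M_k| ≥ x and [M]_k + ⟨M⟩_k ≤ y) ≤ 2·exp(−x²/(2y)). -/

import Mathlib

/-!
For every real `s`, the process `exp (s Mₙ - s²/2 ([M]ₙ + ⟨M⟩ₙ))` has expectation at most one.
The one-step bound rests on `exp (z - z²/2) ≤ 1 + z + z²/2` with `z = s ΔMₙ`: conditionally on
`ℱ (n - 1)` the linear term vanishes, and the quadratic term `s²/2 E[ΔMₙ² | ℱ (n - 1)]` is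
absorbed by the factor `exp (-s²/2 E[ΔMₙ² | ℱ (n - 1)])` coming from `⟨M⟩ₙ`, since
`exp (-u) (1 + u) ≤ 1`. As `s d - s²d²/2 ≤ 1/2`, the process is bounded by `exp (n/2)`, so all
the integrals involved are finite. Markov's inequality with `s = x / y` gives the one-sided bound
`exp (-x²/(2y))`, and applying it to `M` and `-M` gives the two-sided one.
-/

open MeasureTheory ProbabilityTheory Real Finset

lemma exp_mul_one_sub_le_one (u : ℝ) : exp u * (1 - u) ≤ 1 := by
  calc exp u * (1 - u) ≤ exp u * exp (-u) := by gcongr; linarith [add_one_le_exp (-u)]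
    _ = 1 := by rw [← exp_add, add_neg_cancel, exp_zero]

lemma exp_sub_sq_div_two_le (z : ℝ) : exp (z - z ^ 2 / 2) ≤ 1 + z + z ^ 2 / 2 := by
  have hpos : 0 < 1 - (z - z ^ 2 / 2) := by nlinarith [sq_nonneg (z - 1)]
  calc exp (z - z ^ 2 / 2) ≤ 1 / (1 - (z - z ^ 2 / 2)) :=
        (le_div_iff₀ hpos).2 (exp_mul_one_sub_le_one _)
    _ ≤ 1 + z + z ^ 2 / 2 := by
      -- `(1 + z + z²/2) (1 - z + z²/2) = 1 + z⁴/4`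
      rw [div_le_iff₀ hpos]
      nlinarith [sq_nonneg (z ^ 2)]

section CondExp

variable {Ω : Type*} {m m0 : MeasurableSpace Ω} {μ : Measure Ω}

lemma integral_mul_condExp (hm : m ≤ m0) [SigmaFinite (μ.trim hm)] {B f : Ω → ℝ} {C : ℝ}
    (hB : StronglyMeasurable[m] B) (hBC : ∀ᵐ ω ∂μ, ‖B ω‖ ≤ C) (hf : Integrable f μ) :
    ∫ ω, B ω * μ[f | m] ω ∂μ = ∫ ω, B ω * f ω ∂μ := by
  refine (integral_congr_ae ?_).trans (integral_condExp hm)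
  exact (condExp_mul_of_stronglyMeasurable_left hB
    (hf.bdd_mul (hB.mono hm).aestronglyMeasurable hBC) hf).symm

lemma integral_mul_exp_le [IsFiniteMeasure μ] (hm : m ≤ m0) {B D : Ω → ℝ} {C : ℝ}
    (hB : StronglyMeasurable[m] B) (hB0 : 0 ≤ B) (hBC : ∀ᵐ ω ∂μ, B ω ≤ C)
    (hD : MemLp D 2 μ) (hDm : μ[D | m] =ᵐ[μ] 0) (s : ℝ) :
    ∫ ω, B ω * exp (s * D ω - s ^ 2 / 2 * D ω ^ 2) ∂μ
      ≤ ∫ ω, B ω * (1 + s ^ 2 / 2 * μ[fun ω => D ω ^ 2 | m] ω) ∂μ := by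
  have hDint : Integrable D μ := hD.integrable one_le_two
  have hBm : AEStronglyMeasurable B μ := (hB.mono hm).aestronglyMeasurable
  have hBC' : ∀ᵐ ω ∂μ, ‖B ω‖ ≤ C := by
    filter_upwards [hBC] with ω h
    rwa [Real.norm_of_nonneg (hB0 ω)]
  have hBint : Integrable B μ := .of_bound hBm C hBC'
  have hBD : Integrable (fun ω => B ω * D ω) μ := hDint.bdd_mul hBm hBC'
  have hBD2 : Integrable (fun ω => B ω * D ω ^ 2) μ := hD.integrable_sq.bdd_mul hBm hBC'
  have hBE : Integrable (fun ω => B ω * μ[fun ω => D ω ^ 2 | m] ω) μ :=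
    integrable_condExp.bdd_mul hBm hBC'
  have hlinear : ∫ ω, B ω * D ω ∂μ = 0 := by
    rw [← integral_mul_condExp hm hB hBC' hDint]
    exact integral_eq_zero_of_ae (by filter_upwards [hDm] with ω h; simp [h])
  have hquadratic := integral_mul_condExp hm hB hBC' hD.integrable_sq
  have hBsD : Integrable (fun ω => B ω + s * (B ω * D ω)) μ := hBint.add (hBD.const_mul s)
  calc ∫ ω, B ω * exp (s * D ω - s ^ 2 / 2 * D ω ^ 2) ∂μ
      ≤ ∫ ω, B ω + s * (B ω * D ω) + s ^ 2 / 2 * (B ω * D ω ^ 2) ∂μ := by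
        refine integral_mono_of_nonneg (ae_of_all _ fun ω => mul_nonneg (hB0 ω) (exp_pos _).le)
          (hBsD.add (hBD2.const_mul _)) (ae_of_all _ fun ω => ?_)
        have := exp_sub_sq_div_two_le (s * D ω)
        calc B ω * exp (s * D ω - s ^ 2 / 2 * D ω ^ 2)
            = B ω * exp (s * D ω - (s * D ω) ^ 2 / 2) := by ring_nf
          _ ≤ B ω * (1 + s * D ω + (s * D ω) ^ 2 / 2) := by gcongr; exact hB0 ω
          _ = _ := by ring
    _ = ∫ ω, B ω * (1 + s ^ 2 / 2 * μ[fun ω => D ω ^ 2 | m] ω) ∂μ := by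
        simp only [mul_add, mul_one, mul_left_comm (B _) (s ^ 2 / 2)]
        rw [integral_add hBsD (hBD2.const_mul _),
          integral_add hBint (hBD.const_mul s), integral_add hBint (hBE.const_mul _),
          integral_const_mul, integral_const_mul, integral_const_mul, hlinear, hquadratic]
        ring

end CondExp

lemma MeasureTheory.Martingale.condExp_sub_eq_zero {Ω ι E : Type*} {m0 : MeasurableSpace Ω}
    {μ : Measure Ω} [Preorder ι] [NormedAddCommGroup E] [NormedSpace ℝ E] [CompleteSpace E]
    {ℱ : Filtration ι m0} {f : ι → Ω → E} (hf : Martingale f ℱ μ) {i j : ι} (hij : i ≤ j) :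
    μ[f j - f i | ℱ i] =ᵐ[μ] 0 := by
  filter_upwards [condExp_sub (hf.integrable j) (hf.integrable i) (ℱ i),
    hf.condExp_ae_eq hij, hf.condExp_ae_eq (le_refl i)] with ω hsub hj hi
  simp [hsub, hj, hi]

section ExpProcess

variable {Ω : Type*} {m0 : MeasurableSpace Ω} {μ : Measure Ω} {ℱ : Filtration ℕ m0}
  {M : ℕ → Ω → ℝ}

def quadVar (M : ℕ → Ω → ℝ) (n : ℕ) (ω : Ω) : ℝ :=
  ∑ i ∈ Icc 1 n, (M i ω - M (i - 1) ω) ^ 2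

variable (μ ℱ) in
noncomputable def predQuadVar (M : ℕ → Ω → ℝ) (n : ℕ) (ω : Ω) : ℝ :=
  ∑ i ∈ Icc 1 n, μ[fun ω' => (M i ω' - M (i - 1) ω') ^ 2 | ℱ (i - 1)] ω

variable (μ ℱ) in
noncomputable def expProcess (M : ℕ → Ω → ℝ) (s : ℝ) (n : ℕ) (ω : Ω) : ℝ :=
  exp (s * M n ω - s ^ 2 / 2 * (quadVar M n ω + predQuadVar μ ℱ M n ω))

lemma expProcess_pos (s : ℝ) (n : ℕ) (ω : Ω) : 0 < expProcess μ ℱ M s n ω :=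
  exp_pos _

lemma quadVar_succ (n : ℕ) (ω : Ω) :
    quadVar M (n + 1) ω = quadVar M n ω + (M (n + 1) ω - M n ω) ^ 2 := by
  simp [quadVar, sum_Icc_succ_top]

lemma predQuadVar_succ (n : ℕ) (ω : Ω) :
    predQuadVar μ ℱ M (n + 1) ω
      = predQuadVar μ ℱ M n ω + μ[fun ω' => (M (n + 1) ω' - M n ω') ^ 2 | ℱ n] ω := by
  simp [predQuadVar, sum_Icc_succ_top]

lemma quadVar_neg : quadVar (-M) = quadVar M := by
  ext n ω
  simp only [quadVar, Pi.neg_apply]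
  ring_nf

lemma predQuadVar_neg : predQuadVar μ ℱ (-M) = predQuadVar μ ℱ M := by
  ext n ω
  simp only [predQuadVar, Pi.neg_apply]
  ring_nf

lemma predQuadVar_nonneg (n : ℕ) : ∀ᵐ ω ∂μ, 0 ≤ predQuadVar μ ℱ M n ω := by
  filter_upwards [ae_all_iff.2 fun i =>
    condExp_nonneg (m := ℱ (i - 1)) (f := fun ω => (M i ω - M (i - 1) ω) ^ 2)
      (ae_of_all μ fun ω => sq_nonneg _)]
    with ω hω
  exact sum_nonneg fun i _ => hω i

lemma eq_sum_Icc_sub (hM0 : M 0 = 0) (n : ℕ) (ω : Ω) :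
    M n ω = ∑ i ∈ Icc 1 n, (M i ω - M (i - 1) ω) := by
  induction n with
  | zero => simp [hM0]
  | succ n ih => rw [sum_Icc_succ_top (by omega), ← ih, Nat.add_sub_cancel, add_sub_cancel]

lemma stronglyMeasurable_quadVar (hM : StronglyAdapted ℱ M) (n : ℕ) :
    StronglyMeasurable[ℱ n] (quadVar M n) :=
  Finset.stronglyMeasurable_fun_sum _ fun i hi =>
    (((hM i).mono (ℱ.mono (mem_Icc.1 hi).2)).sub
      ((hM (i - 1)).mono (ℱ.mono (by grind)))).pow 2

lemma stronglyMeasurable_predQuadVar (n : ℕ) :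
    StronglyMeasurable[ℱ (n - 1)] (predQuadVar μ ℱ M n) :=
  Finset.stronglyMeasurable_fun_sum _ fun i hi =>
    stronglyMeasurable_condExp.mono (ℱ.mono (by grind))

lemma stronglyMeasurable_expProcess (hM : StronglyAdapted ℱ M) (s : ℝ) (n : ℕ) :
    StronglyMeasurable[ℱ n] (expProcess μ ℱ M s n) :=
  continuous_exp.comp_stronglyMeasurable <| ((hM n).const_mul s).sub <|
    ((stronglyMeasurable_quadVar hM n).add
      ((stronglyMeasurable_predQuadVar n).mono (ℱ.mono (n.sub_le 1)))).const_mul _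

lemma expProcess_le (hM0 : M 0 = 0) (s : ℝ) (n : ℕ) :
    ∀ᵐ ω ∂μ, expProcess μ ℱ M s n ω ≤ exp (n / 2) := by
  filter_upwards [predQuadVar_nonneg n] with ω hV
  have hincrements : s * M n ω - s ^ 2 / 2 * quadVar M n ω ≤ n / 2 := by
    calc s * M n ω - s ^ 2 / 2 * quadVar M n ω
        = ∑ i ∈ Icc 1 n,
            (s * (M i ω - M (i - 1) ω) - s ^ 2 / 2 * (M i ω - M (i - 1) ω) ^ 2) := by
          rw [eq_sum_Icc_sub hM0 n ω, quadVar, mul_sum, mul_sum, sum_sub_distrib]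
      _ ≤ ∑ i ∈ Icc 1 n, (1 / 2 : ℝ) :=
          sum_le_sum fun i _ => by nlinarith [sq_nonneg (s * (M i ω - M (i - 1) ω) - 1)]
      _ = n / 2 := by simp [div_eq_mul_inv]
  refine exp_le_exp.2 ?_
  nlinarith [mul_nonneg (sq_nonneg s) hV]

lemma integrable_expProcess [IsFiniteMeasure μ] (hM : StronglyAdapted ℱ M) (hM0 : M 0 = 0)
    (s : ℝ) (n : ℕ) : Integrable (expProcess μ ℱ M s n) μ := by
  refine .of_bound ((stronglyMeasurable_expProcess hM s n).mono (ℱ.le n)).aestronglyMeasurable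
    (exp (n / 2)) ?_
  filter_upwards [expProcess_le (ℱ := ℱ) hM0 s n] with ω h
  rwa [Real.norm_of_nonneg (expProcess_pos s n ω).le]

lemma expProcess_succ (s : ℝ) (n : ℕ) (ω : Ω) :
    expProcess μ ℱ M s (n + 1) ω
      = expProcess μ ℱ M s n ω
        * exp (-(s ^ 2 / 2) * μ[fun ω' => (M (n + 1) ω' - M n ω') ^ 2 | ℱ n] ω)
        * exp (s * (M (n + 1) ω - M n ω) - s ^ 2 / 2 * (M (n + 1) ω - M n ω) ^ 2) := by
  simp only [expProcess, quadVar_succ, predQuadVar_succ, ← exp_add]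
  ring_nf

lemma integral_expProcess_le_one [IsProbabilityMeasure μ] (hM : Martingale M ℱ μ)
    (hM0 : M 0 = 0) (hL2 : ∀ n, MemLp (M n) 2 μ) (s : ℝ) (n : ℕ) :
    ∫ ω, expProcess μ ℱ M s n ω ∂μ ≤ 1 := by
  induction n with
  | zero => simp [expProcess, quadVar, predQuadVar, hM0]
  | succ n ih =>
    set E := μ[fun ω => (M (n + 1) ω - M n ω) ^ 2 | ℱ n]
    set B := fun ω => expProcess μ ℱ M s n ω * exp (-(s ^ 2 / 2) * E ω)
    have hE : 0 ≤ᵐ[μ] E := condExp_nonneg (ae_of_all _ fun ω => sq_nonneg _)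
    have hB : StronglyMeasurable[ℱ n] B :=
      (stronglyMeasurable_expProcess hM.stronglyAdapted s n).mul
        (continuous_exp.comp_stronglyMeasurable (stronglyMeasurable_condExp.const_mul _))
    have hB0 : 0 ≤ B := fun ω => mul_nonneg (expProcess_pos s n ω).le (exp_pos _).le
    have hBC : ∀ᵐ ω ∂μ, B ω ≤ exp (n / 2) := by
      filter_upwards [expProcess_le (ℱ := ℱ) hM0 s n, hE] with ω hG hEω
      refine (mul_le_of_le_one_right (expProcess_pos s n ω).le ?_).trans hG
      exact exp_le_one_iff.2 (mul_nonpos_of_nonpos_of_nonneg (by nlinarith [sq_nonneg s]) hEω)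
    calc ∫ ω, expProcess μ ℱ M s (n + 1) ω ∂μ
        = ∫ ω, B ω
            * exp (s * (M (n + 1) ω - M n ω) - s ^ 2 / 2 * (M (n + 1) ω - M n ω) ^ 2) ∂μ :=
          integral_congr_ae (ae_of_all _ fun ω => expProcess_succ s n ω)
      _ ≤ ∫ ω, B ω * (1 + s ^ 2 / 2 * E ω) ∂μ :=
          integral_mul_exp_le (ℱ.le n) hB hB0 hBC ((hL2 (n + 1)).sub (hL2 n))
            (hM.condExp_sub_eq_zero n.le_succ) s
      _ ≤ ∫ ω, expProcess μ ℱ M s n ω ∂μ := by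
          refine integral_mono_of_nonneg ?_ (integrable_expProcess hM.stronglyAdapted hM0 s n) ?_
          · filter_upwards [hE] with ω hEω
            exact mul_nonneg (hB0 ω) (add_nonneg zero_le_one (mul_nonneg (by positivity) hEω))
          · refine ae_of_all _ fun ω => ?_
            calc B ω * (1 + s ^ 2 / 2 * E ω)
                = expProcess μ ℱ M s n ω
                    * (exp (-(s ^ 2 / 2 * E ω)) * (1 - -(s ^ 2 / 2 * E ω))) := by
                  simp only [B, neg_mul]; ring
              _ ≤ expProcess μ ℱ M s n ω :=
                  mul_le_of_le_one_right (expProcess_pos s n ω).le (exp_mul_one_sub_le_one _)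
      _ ≤ 1 := ih

lemma measure_le_expProcess_le [IsProbabilityMeasure μ] (hM : Martingale M ℱ μ)
    (hM0 : M 0 = 0) (hL2 : ∀ n, MemLp (M n) 2 μ) (s : ℝ) (n : ℕ) {c : ℝ} (hc : 0 < c) :
    μ {ω | c ≤ expProcess μ ℱ M s n ω} ≤ ENNReal.ofReal c⁻¹ := by
  have hMarkov := (mul_meas_ge_le_integral_of_nonneg
    (ae_of_all _ fun ω => (expProcess_pos s n ω).le)
    (integrable_expProcess hM.stronglyAdapted hM0 s n) c).trans
    (integral_expProcess_le_one hM hM0 hL2 s n)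
  rw [← ofReal_measureReal]
  exact ENNReal.ofReal_le_ofReal ((le_inv_mul_iff₀ hc).2 hMarkov |>.trans_eq (mul_one _))

lemma measure_le_and_quadVar_add_predQuadVar_le [IsProbabilityMeasure μ]
    (hM : Martingale M ℱ μ) (hM0 : M 0 = 0) (hL2 : ∀ n, MemLp (M n) 2 μ) (n : ℕ) {x y : ℝ}
    (hx : 0 < x) (hy : 0 < y) :
    μ {ω | x ≤ M n ω ∧ quadVar M n ω + predQuadVar μ ℱ M n ω ≤ y}
      ≤ ENNReal.ofReal (exp (-x ^ 2 / (2 * y))) := by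
  have hsub : {ω | x ≤ M n ω ∧ quadVar M n ω + predQuadVar μ ℱ M n ω ≤ y}
      ⊆ {ω | exp (x ^ 2 / (2 * y)) ≤ expProcess μ ℱ M (x / y) n ω} := by
    rintro ω ⟨hxM, hV⟩
    refine exp_le_exp.2 ?_
    have ht : 0 ≤ x / y := by positivity
    calc x ^ 2 / (2 * y) = x / y * x - (x / y) ^ 2 / 2 * y := by field_simp; ring
      _ ≤ x / y * M n ω - (x / y) ^ 2 / 2 * (quadVar M n ω + predQuadVar μ ℱ M n ω) := by
          gcongr
  calc _ ≤ _ := measure_mono hsub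
    _ ≤ _ := measure_le_expProcess_le hM hM0 hL2 _ n (exp_pos _)
    _ = _ := by rw [← exp_neg, neg_div]

end ExpProcess

theorem bercu_touati
    {Ω : Type*} {m0 : MeasurableSpace Ω} {μ : Measure Ω} [IsProbabilityMeasure μ]
    (ℱ : Filtration ℕ m0) (M : ℕ → Ω → ℝ)
    (hM : Martingale M ℱ μ) (hM0 : M 0 = 0)
    (hL2 : ∀ k, MemLp (M k) 2 μ)
    (k : ℕ) (x y : ℝ) (hx : 0 < x) (hy : 0 < y) :
    μ {ω | x ≤ |M k ω| ∧
        (∑ i ∈ Finset.Icc 1 k, (M i ω - M (i - 1) ω) ^ 2)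
          + (∑ i ∈ Finset.Icc 1 k,
              (μ[fun ω' => (M i ω' - M (i - 1) ω') ^ 2 | ℱ (i - 1)]) ω) ≤ y}
      ≤ ENNReal.ofReal (2 * Real.exp (-x ^ 2 / (2 * y))) := by
  have hupper := measure_le_and_quadVar_add_predQuadVar_le hM hM0 hL2 k hx hy
  have hlower := measure_le_and_quadVar_add_predQuadVar_le hM.neg (by simp [hM0])
    (fun n => (hL2 n).neg) k hx hy
  rw [quadVar_neg, predQuadVar_neg] at hlower
  calc μ {ω | x ≤ |M k ω| ∧ quadVar M k ω + predQuadVar μ ℱ M k ω ≤ y}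
      ≤ μ ({ω | x ≤ M k ω ∧ quadVar M k ω + predQuadVar μ ℱ M k ω ≤ y}
          ∪ {ω | x ≤ (-M) k ω ∧ quadVar M k ω + predQuadVar μ ℱ M k ω ≤ y}) :=
        measure_mono fun ω ⟨hxM, hV⟩ => (le_abs.1 hxM).imp (⟨·, hV⟩) (⟨·, hV⟩)
    _ ≤ _ := measure_union_le _ _
    _ ≤ _ := add_le_add hupper hlower
    _ = _ := by rw [← ENNReal.ofReal_add (exp_pos _).le (exp_pos _).le, ← two_mul]
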